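/- Let Π be a Borel probability measure on [0,1] with E_{Θ~Π}[H_B(Θ)] > 0. Then there exist r ∈ (0, 1/2), b ∈ (0,1), and a finite ℓ₀ such that for all integers k ≥ ℓ₀, P(Γ_k ≤ (1-r)·k) > b. -/

import Mathlib

/-!
Given `Θ = θ`, `Γ_k` has mean `(k - 1)(θ² + (1 - θ)²) = (k - 1)(1 - 2θ(1 - θ))`, so Markov's
inequality bounds `P(Γ_k ≤ (1 - δ) k | Θ = θ)` below by `δ / (1 - δ)` as soon as `δ ≤ θ(1 - θ)`.
Since `H_B` vanishes at `0` and `1`, positive mean entropy forces `Π` to charge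
`{θ | δ ≤ θ(1 - θ)}` for some `δ > 0`, and integrating the conditional bound over that set gives
a lower bound uniform in `k ≥ 1`.
-/

open MeasureTheory

/-- Binary entropy `H_B(p) = -p log₂ p - (1-p) log₂ (1-p)` (with `0 log 0 = 0`). -/
noncomputable def binEnt (p : ℝ) : ℝ :=
  -(p * Real.logb 2 p) - (1 - p) * Real.logb 2 (1 - p)

/-- Expectation of `g (Γ_k)` where `θ ~ μ` and, conditionally on `θ`, `Γ_k` is
`Binomial(k-1, θ)` with probability `θ` and `Binomial(k-1, 1-θ)` with probability `1-θ`. -/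
noncomputable def gammaExp (μ : Measure ℝ) (k : ℕ) (g : ℕ → ℝ) : ℝ :=
  ∫ θ, (θ * ∑ j ∈ Finset.range k,
          ((k - 1).choose j : ℝ) * θ ^ j * (1 - θ) ^ (k - 1 - j) * g j
      + (1 - θ) * ∑ j ∈ Finset.range k,
          ((k - 1).choose j : ℝ) * (1 - θ) ^ j * θ ^ (k - 1 - j) * g j) ∂μ

open Finset

noncomputable def binomialExp (n : ℕ) (x : ℝ) (g : ℕ → ℝ) : ℝ :=
  ∑ j ∈ range (n + 1), (n.choose j : ℝ) * x ^ j * (1 - x) ^ (n - j) * g j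

section binomialExp

variable {n : ℕ} {x : ℝ}

lemma bernsteinPolynomial_eval (n j : ℕ) (x : ℝ) :
    (bernsteinPolynomial ℝ n j).eval x = (n.choose j : ℝ) * x ^ j * (1 - x) ^ (n - j) := by
  simp [bernsteinPolynomial]

lemma binomialExp_const (n : ℕ) (x c : ℝ) : binomialExp n x (fun _ => c) = c := by
  have h := congrArg (Polynomial.eval x) (bernsteinPolynomial.sum ℝ n)
  simp only [Polynomial.eval_finsetSum, bernsteinPolynomial_eval, Polynomial.eval_one] at h
  simp only [binomialExp, ← Finset.sum_mul, h, one_mul]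

lemma binomialExp_id (n : ℕ) (x : ℝ) : binomialExp n x (fun j => j) = n * x := by
  have h := congrArg (Polynomial.eval x) (bernsteinPolynomial.sum_smul ℝ n)
  simp only [nsmul_eq_mul, Polynomial.eval_finsetSum, Polynomial.eval_mul, Polynomial.eval_natCast,
    bernsteinPolynomial_eval, Polynomial.eval_X] at h
  rw [binomialExp, ← h]
  exact Finset.sum_congr rfl fun j _ => by ring

lemma binomialExp_one_sub_div (n : ℕ) (x t : ℝ) :
    binomialExp n x (fun j => 1 - j / t) = 1 - n * x / t := by
  calc binomialExp n x (fun j => 1 - j / t)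
      = binomialExp n x (fun _ => 1) - binomialExp n x (fun j => j) / t := by
        simp only [binomialExp, mul_sub, mul_div_assoc', sum_sub_distrib, ← sum_div]
    _ = 1 - n * x / t := by rw [binomialExp_const, binomialExp_id]

lemma binomialExp_mono (hx : x ∈ Set.Icc 0 1) {g h : ℕ → ℝ} (hgh : ∀ j, g j ≤ h j) :
    binomialExp n x g ≤ binomialExp n x h := by
  have : 0 ≤ 1 - x := sub_nonneg.2 hx.2
  have := hx.1
  exact Finset.sum_le_sum fun j _ => mul_le_mul_of_nonneg_left (hgh j) (by positivity)

lemma one_sub_mul_div_le_binomialExp (hx : x ∈ Set.Icc 0 1) {t : ℝ} (ht : 0 < t) :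
    1 - n * x / t ≤ binomialExp n x (fun j => if (j : ℝ) ≤ t then 1 else 0) := by
  rw [← binomialExp_one_sub_div]
  refine binomialExp_mono hx fun j => ?_
  -- Markov: the indicator of `j ≤ t` dominates `1 - j / t`.
  split_ifs with hj
  · have : 0 ≤ (j : ℝ) / t := by positivity
    linarith
  · have : 1 ≤ (j : ℝ) / t := (one_le_div ht).2 (by linarith)
    linarith

end binomialExp

noncomputable def gammaCond (k : ℕ) (g : ℕ → ℝ) (θ : ℝ) : ℝ :=
  θ * ∑ j ∈ range k, ((k - 1).choose j : ℝ) * θ ^ j * (1 - θ) ^ (k - 1 - j) * g j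
    + (1 - θ) * ∑ j ∈ range k, ((k - 1).choose j : ℝ) * (1 - θ) ^ j * θ ^ (k - 1 - j) * g j

lemma gammaExp_eq_integral_gammaCond (μ : Measure ℝ) (k : ℕ) (g : ℕ → ℝ) :
    gammaExp μ k g = ∫ θ, gammaCond k g θ ∂μ := rfl

lemma continuous_gammaCond (k : ℕ) (g : ℕ → ℝ) : Continuous (gammaCond k g) := by
  unfold gammaCond
  fun_prop

lemma gammaCond_succ (n : ℕ) (g : ℕ → ℝ) (θ : ℝ) :
    gammaCond (n + 1) g θ = θ * binomialExp n θ g + (1 - θ) * binomialExp n (1 - θ) g := by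
  simp only [gammaCond, binomialExp, Nat.add_sub_cancel, sub_sub_cancel]

section gammaCond

variable {n : ℕ} {θ : ℝ}

lemma gammaCond_succ_mem_Icc (hθ : θ ∈ Set.Icc 0 1) {g : ℕ → ℝ} (hg : ∀ j, g j ∈ Set.Icc 0 1) :
    gammaCond (n + 1) g θ ∈ Set.Icc 0 1 := by
  have hθ' : 1 - θ ∈ Set.Icc 0 1 := ⟨sub_nonneg.2 hθ.2, sub_le_self _ hθ.1⟩
  have bounds : ∀ x ∈ Set.Icc (0 : ℝ) 1, binomialExp n x g ∈ Set.Icc 0 1 := fun x hx =>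
    ⟨binomialExp_const n x 0 ▸ binomialExp_mono hx fun j => (hg j).1,
      binomialExp_const n x 1 ▸ binomialExp_mono hx fun j => (hg j).2⟩
  obtain ⟨h0, h1⟩ := bounds θ hθ
  obtain ⟨h0', h1'⟩ := bounds _ hθ'
  rw [gammaCond_succ]
  constructor <;> nlinarith [hθ.1, hθ'.1]

lemma one_sub_mul_div_le_gammaCond (hθ : θ ∈ Set.Icc 0 1) {t : ℝ} (ht : 0 < t) :
    1 - n * (θ ^ 2 + (1 - θ) ^ 2) / t ≤
      gammaCond (n + 1) (fun j => if (j : ℝ) ≤ t then 1 else 0) θ := by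
  have hθ' : 1 - θ ∈ Set.Icc 0 1 := ⟨sub_nonneg.2 hθ.2, sub_le_self _ hθ.1⟩
  rw [gammaCond_succ]
  calc 1 - n * (θ ^ 2 + (1 - θ) ^ 2) / t
      = θ * (1 - n * θ / t) + (1 - θ) * (1 - n * (1 - θ) / t) := by field_simp; ring
    _ ≤ _ := by
      gcongr
      exacts [hθ.1, one_sub_mul_div_le_binomialExp hθ ht,
        hθ'.1, one_sub_mul_div_le_binomialExp hθ' ht]

lemma div_one_sub_le_gammaCond (hθ : θ ∈ Set.Icc 0 1) {δ : ℝ} (hδ : δ ≤ θ * (1 - θ)) :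
    δ / (1 - δ) ≤ gammaCond (n + 1)
      (fun j => if (j : ℝ) ≤ (1 - δ) * ((n + 1 : ℕ) : ℝ) then 1 else 0) θ := by
  have hδ4 : δ ≤ 1 / 4 := by nlinarith [sq_nonneg (2 * θ - 1)]
  have h1δ : 0 < 1 - δ := by linarith
  have ht : 0 < (1 - δ) * ((n + 1 : ℕ) : ℝ) := by positivity
  refine le_trans ?_ (one_sub_mul_div_le_gammaCond hθ ht)
  have hsq : θ ^ 2 + (1 - θ) ^ 2 ≤ 1 - 2 * δ := by nlinarith
  have hmean :
      n * (θ ^ 2 + (1 - θ) ^ 2) / ((1 - δ) * ((n + 1 : ℕ) : ℝ)) ≤ (1 - 2 * δ) / (1 - δ) := by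
    rw [div_le_div_iff₀ ht h1δ]
    push_cast
    have hn : (0 : ℝ) ≤ n * (1 - δ) := by positivity
    nlinarith [mul_le_mul_of_nonneg_left hsq hn,
      mul_nonneg (by linarith : (0 : ℝ) ≤ 1 - 2 * δ) h1δ.le]
  have : δ / (1 - δ) = 1 - (1 - 2 * δ) / (1 - δ) := by field_simp; ring
  linarith

end gammaCond

lemma binEnt_eq_zero_of_mul_one_sub_eq_zero {θ : ℝ} (h : θ * (1 - θ) = 0) : binEnt θ = 0 := by
  rcases mul_eq_zero.1 h with h | h
  · simp [binEnt, h]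
  · obtain rfl : θ = 1 := by linarith
    simp [binEnt]

lemma measure_mul_one_sub_pos_ne_zero {μ : Measure ℝ} (hsupp : μ (Set.Icc (0 : ℝ) 1)ᶜ = 0)
    (hpos : 0 < ∫ θ, binEnt θ ∂μ) : μ {θ | 0 < θ * (1 - θ)} ≠ 0 := by
  intro h
  have hzero : ∀ᵐ θ ∂μ, binEnt θ = 0 := by
    filter_upwards [measure_eq_zero_iff_ae_notMem.1 hsupp, measure_eq_zero_iff_ae_notMem.1 h]
      with θ hθ hθ'
    simp only [Set.mem_compl_iff, not_not, not_lt] at hθ hθ'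
    exact binEnt_eq_zero_of_mul_one_sub_eq_zero
      (le_antisymm hθ' (mul_nonneg hθ.1 (sub_nonneg.2 hθ.2)))
  rw [integral_congr_ae hzero, integral_zero] at hpos
  exact lt_irrefl 0 hpos

lemma exists_pos_measure_le_ne_zero {α : Type*} [MeasurableSpace α] {μ : Measure α} {f : α → ℝ}
    (h : μ {x | 0 < f x} ≠ 0) : ∃ δ > 0, μ {x | δ ≤ f x} ≠ 0 := by
  by_contra! hnull
  refine h (measure_mono_null (fun x (hx : 0 < f x) => ?_)
    (measure_iUnion_null fun n : ℕ => hnull (1 / (n + 1)) Nat.one_div_pos_of_nat))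
  obtain ⟨n, hn⟩ := exists_nat_one_div_lt hx
  exact Set.mem_iUnion.2 ⟨n, hn.le⟩

lemma ae_gammaCond_succ_mem_Icc {μ : Measure ℝ} (hsupp : μ (Set.Icc (0 : ℝ) 1)ᶜ = 0) (n : ℕ)
    {g : ℕ → ℝ} (hg : ∀ j, g j ∈ Set.Icc 0 1) :
    ∀ᵐ θ ∂μ, gammaCond (n + 1) g θ ∈ Set.Icc 0 1 := by
  filter_upwards [measure_eq_zero_iff_ae_notMem.1 hsupp] with θ hθ
  exact gammaCond_succ_mem_Icc (not_not.1 hθ) hg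

lemma integrable_gammaCond_succ {μ : Measure ℝ} [IsFiniteMeasure μ]
    (hsupp : μ (Set.Icc (0 : ℝ) 1)ᶜ = 0) (n : ℕ) {g : ℕ → ℝ} (hg : ∀ j, g j ∈ Set.Icc 0 1) :
    Integrable (gammaCond (n + 1) g) μ := by
  refine (integrable_const 1).mono' (continuous_gammaCond _ g).aestronglyMeasurable ?_
  filter_upwards [ae_gammaCond_succ_mem_Icc hsupp n hg] with θ hθ
  rw [Real.norm_of_nonneg hθ.1]
  exact hθ.2

theorem stmt8 (μ : Measure ℝ) [IsProbabilityMeasure μ]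
    (hsupp : μ (Set.Icc (0:ℝ) 1)ᶜ = 0)
    (hpos : 0 < ∫ θ, binEnt θ ∂μ) :
    ∃ r ∈ Set.Ioo (0:ℝ) (1/2), ∃ b ∈ Set.Ioo (0:ℝ) 1, ∃ ℓ₀ : ℕ, 1 ≤ ℓ₀ ∧
      ∀ k : ℕ, ℓ₀ ≤ k →
        b < gammaExp μ k (fun j => if (j : ℝ) ≤ (1 - r) * (k : ℝ) then 1 else 0) := by
  obtain ⟨δ, hδ, hA⟩ := exists_pos_measure_le_ne_zero (measure_mul_one_sub_pos_ne_zero hsupp hpos)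
  set A := {θ : ℝ | δ ≤ θ * (1 - θ)}
  obtain ⟨θ₀, hθ₀ : δ ≤ θ₀ * (1 - θ₀)⟩ := nonempty_of_measure_ne_zero hA
  have hδ4 : δ ≤ 1 / 4 := by nlinarith [sq_nonneg (2 * θ₀ - 1)]
  set m := δ / (1 - δ)
  have hm : 0 < m := div_pos hδ (by linarith)
  have hm1 : m < 1 := (div_lt_one (by linarith)).2 (by linarith)
  set c := μ.real A
  have hc : 0 < c := ENNReal.toReal_pos hA (measure_ne_top μ A)
  have hc1 : c ≤ 1 := measureReal_le_one
  refine ⟨δ, ⟨hδ, by linarith⟩, m * c / 2, ⟨by positivity, by nlinarith⟩, 1, le_rfl, fun k hk => ?_⟩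
  obtain ⟨n, rfl⟩ := Nat.exists_eq_add_of_le' hk
  set g : ℕ → ℝ := fun j => if (j : ℝ) ≤ (1 - δ) * ((n + 1 : ℕ) : ℝ) then 1 else 0
  have hg : ∀ j, g j ∈ Set.Icc 0 1 := fun j => by simp only [g]; split_ifs <;> simp
  have hAsub : A ⊆ {θ | m ≤ gammaCond (n + 1) g θ} := fun θ (hθ : δ ≤ θ * (1 - θ)) =>
    div_one_sub_le_gammaCond ⟨by nlinarith, by nlinarith⟩ hθ
  calc m * c / 2 < m * c := by linarith [mul_pos hm hc]
    _ ≤ m * μ.real {θ | m ≤ gammaCond (n + 1) g θ} := by gcongr; exact measureReal_mono hAsub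
    _ ≤ gammaExp μ (n + 1) g := by
      rw [gammaExp_eq_integral_gammaCond]
      refine mul_meas_ge_le_integral_of_nonneg ?_ (integrable_gammaCond_succ hsupp n hg) m
      filter_upwards [ae_gammaCond_succ_mem_Icc hsupp n hg] with θ hθ
      exact hθ.1
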